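/- Suppose char F = 2. Let C be a self-dual 2-quasi-cyclic code of length 2n over F with Goursat data (C1, C2, C12, g). Then C is a dihedral code if and only if C̄1 = C2. -/

import Mathlib

noncomputable section

/-- The cyclic group of order `n`, written multiplicatively. -/
abbrev Zn (n : ℕ) := Multiplicative (ZMod n)

/-- The group algebra `FH` of the cyclic group of order `n` over `F`. -/
abbrev FH (F : Type*) [Field F] (n : ℕ) := MonoidAlgebra F (Zn n)

variable {F : Type*} [Field F] [Fintype F] {n : ℕ} [NeZero n]

/-- The "bar" map of the group algebra, induced by `x ↦ x⁻¹`. -/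
def bar (a : FH F n) : FH F n := MonoidAlgebra.ofCoeff (Finsupp.equivMapDomain (Equiv.inv (Zn n)) a.coeff)

/-- The inner product on `FH`: `⟨a, b⟩ = ∑ a_g * b_g`. -/
def innerFH (a b : FH F n) : F := ∑ g : Zn n, a.coeff g * b.coeff g

/-- The inner product on `FH × FH`. -/
def innerFH2 (a b : FH F n × FH F n) : F := innerFH a.1 b.1 + innerFH a.2 b.2

/-- `Ĉ₁₂ = {(c, c·g) : c ∈ C12}` as an `FH`-submodule of `FH × FH`. -/
def hatSub (C12 : Ideal (FH F n)) (g : FH F n) : Submodule (FH F n) (FH F n × FH F n) :=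
  Submodule.map (LinearMap.prod LinearMap.id (LinearMap.mulRight (FH F n) g)) C12

/-- A 2-quasi-cyclic code (an `FH`-submodule of `FH × FH`) is self-dual if it
equals its orthogonal complement. -/
def IsSelfDual (C : Submodule (FH F n) (FH F n × FH F n)) : Prop :=
  (C : Set (FH F n × FH F n)) = {v | ∀ c ∈ C, innerFH2 v c = 0}

/-- A 2-quasi-cyclic code is a dihedral code iff it is invariant under
`(a, a') ↦ (ā', ā)` (left multiplication by `y` in the dihedral group algebra). -/
def IsDihedral (C : Submodule (FH F n) (FH F n × FH F n)) : Prop :=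
  ∀ p ∈ C, (bar p.2, bar p.1) ∈ C

/-- A 2-quasi-cyclic code is a consta-dihedral code iff it is invariant under
`(a, a') ↦ (−ā', ā)` (left multiplication by `ỹ` in the consta-dihedral algebra). -/
def IsConstaDihedral (C : Submodule (FH F n) (FH F n × FH F n)) : Prop :=
  ∀ p ∈ C, (-(bar p.2), bar p.1) ∈ C

/-!
Write `y · (a, a') = (ā', ā)`. The Goursat data let one read off `C1` and `C2` from `C` as
`{a | (a, 0) ∈ C}` and `{b | (0, b) ∈ C}`, and `y` swaps these two kinds of vectors; so if `C`
is dihedral then `C̄1 = C2`. Conversely, if `C̄1 = C2` then `y` preserves `C1 × C2`, and as `y` is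
self-adjoint for the inner product, `y · Ĉ12` is orthogonal to `C1 × C2`. Finally
`⟨y · (c, c g), (d, d g)⟩ = 2 ⟨c̄, d g⟩`, which vanishes in characteristic two, so `y · Ĉ12` lies
in `C^⊥ = C`.
-/

section

variable {F : Type*} [Field F] {n : ℕ}

lemma bar_eq_domCongr (a : FH F n) :
    bar a = MonoidAlgebra.domCongr F F (MulEquiv.inv (Zn n)) a := by
  ext x
  simp [bar]

lemma coeff_bar (a : FH F n) (x : Zn n) : (bar a).coeff x = a.coeff x⁻¹ := rfl

lemma bar_bar (a : FH F n) : bar (bar a) = a := by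
  ext x
  rw [coeff_bar, coeff_bar, inv_inv]

lemma bar_involutive : Function.Involutive (bar : FH F n → FH F n) :=
  bar_bar

lemma bar_add (a b : FH F n) : bar (a + b) = bar a + bar b := by
  simp only [bar_eq_domCongr, map_add]

lemma bar_mul (a b : FH F n) : bar (a * b) = bar a * bar b := by
  simp only [bar_eq_domCongr, map_mul]

@[simp]
lemma bar_zero : bar (0 : FH F n) = 0 := by
  simp only [bar_eq_domCongr, map_zero]

/-- Left multiplication by `y` on `FG ≅ FH × FH`. -/
noncomputable def mulY (p : FH F n × FH F n) : FH F n × FH F n := (bar p.2, bar p.1)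

lemma mulY_add (p q : FH F n × FH F n) : mulY (p + q) = mulY p + mulY q := by
  simp [mulY, bar_add]

lemma mem_hatSub {C12 : Ideal (FH F n)} {g : FH F n} {p : FH F n × FH F n} :
    p ∈ hatSub C12 g ↔ ∃ c ∈ C12, (c, c * g) = p :=
  Submodule.mem_map

section Goursat

variable {C1 C2 C12 : Ideal (FH F n)} {g : FH F n}

lemma mk_zero_mem_goursat_iff {e h : FH F n} (h212 : C2 ⊓ C12 = ⊥)
    (hid : ∀ c ∈ C12, e * c = c) (hgh : g * h = e) {a : FH F n} :
    (a, 0) ∈ Submodule.prod C1 C2 ⊔ hatSub C12 g ↔ a ∈ C1 := by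
  refine ⟨fun ha ↦ ?_, fun ha ↦ Submodule.mem_sup_left ⟨ha, zero_mem C2⟩⟩
  obtain ⟨⟨a₁, b₁⟩, ⟨ha₁, hb₁⟩, _, hz, hsum⟩ := Submodule.mem_sup.mp ha
  obtain ⟨c, hc, rfl⟩ := mem_hatSub.mp hz
  simp only [Prod.mk_add_mk, Prod.mk.injEq] at hsum
  have hcg : c * g ∈ C2 ⊓ C12 :=
    ⟨by rw [eq_neg_of_add_eq_zero_right hsum.2]; exact neg_mem hb₁, Ideal.mul_mem_right g _ hc⟩
  rw [h212, Submodule.mem_bot] at hcg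
  -- `g` is invertible in the ring `C12`, so `c g = 0` forces `c = 0`
  have hc0 : c = 0 := by
    rw [← hid c hc, ← hgh]
    linear_combination h * hcg
  rw [← hsum.1, hc0, add_zero]
  exact ha₁

lemma zero_mk_mem_goursat_iff (h112 : C1 ⊓ C12 = ⊥) {b : FH F n} :
    (0, b) ∈ Submodule.prod C1 C2 ⊔ hatSub C12 g ↔ b ∈ C2 := by
  refine ⟨fun hb ↦ ?_, fun hb ↦ Submodule.mem_sup_left ⟨zero_mem C1, hb⟩⟩
  obtain ⟨⟨a₁, b₁⟩, ⟨ha₁, hb₁⟩, _, hz, hsum⟩ := Submodule.mem_sup.mp hb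
  obtain ⟨c, hc, rfl⟩ := mem_hatSub.mp hz
  simp only [Prod.mk_add_mk, Prod.mk.injEq] at hsum
  have hc1 : c ∈ C1 ⊓ C12 :=
    ⟨by rw [eq_neg_of_add_eq_zero_right hsum.1]; exact neg_mem ha₁, hc⟩
  rw [h112, Submodule.mem_bot] at hc1
  rw [← hsum.2, hc1, zero_mul, add_zero]
  exact hb₁

lemma image_bar_eq_of_isDihedral {e h : FH F n} (h112 : C1 ⊓ C12 = ⊥) (h212 : C2 ⊓ C12 = ⊥)
    (hid : ∀ c ∈ C12, e * c = c) (hgh : g * h = e)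
    (hdih : IsDihedral (Submodule.prod C1 C2 ⊔ hatSub C12 g)) :
    bar '' (C1 : Set (FH F n)) = C2 := by
  refine Set.Subset.antisymm ?_ fun b hb ↦ ⟨bar b, ?_, bar_bar b⟩
  · rintro _ ⟨a, ha, rfl⟩
    have := hdih _ ((mk_zero_mem_goursat_iff h212 hid hgh).mpr ha)
    rwa [bar_zero, zero_mk_mem_goursat_iff h112] at this
  · have := hdih _ ((zero_mk_mem_goursat_iff h112).mpr hb)
    rwa [bar_zero, mk_zero_mem_goursat_iff h212 hid hgh] at this

end Goursat

variable [NeZero n]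

lemma innerFH_eq_coeff_mul_bar (a b : FH F n) : innerFH a b = (a * bar b).coeff 1 := by
  rw [MonoidAlgebra.coeff_mul_apply_left, Finsupp.sum_fintype _ _ (fun _ ↦ zero_mul _)]
  simp [innerFH, coeff_bar]

lemma innerFH_add_right (a b c : FH F n) :
    innerFH a (b + c) = innerFH a b + innerFH a c := by
  simp only [innerFH_eq_coeff_mul_bar, bar_add, mul_add, MonoidAlgebra.coeff_add,
    Finsupp.add_apply]

lemma innerFH_bar_left (a b : FH F n) : innerFH (bar a) b = innerFH a (bar b) := by
  simp only [innerFH, coeff_bar, mul_comm (a.coeff _)]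
  exact Fintype.sum_equiv (Equiv.inv (Zn n)) _ _ fun _ ↦ by simp

lemma innerFH_mul_left (a b c : FH F n) : innerFH (a * c) b = innerFH a (b * bar c) := by
  rw [innerFH_eq_coeff_mul_bar, innerFH_eq_coeff_mul_bar, bar_mul, bar_bar, mul_right_comm, mul_assoc]

lemma innerFH2_add_right (p q r : FH F n × FH F n) :
    innerFH2 p (q + r) = innerFH2 p q + innerFH2 p r := by
  simp only [innerFH2, Prod.fst_add, Prod.snd_add, innerFH_add_right]
  ring

lemma innerFH2_mulY_left (p q : FH F n × FH F n) : innerFH2 (mulY p) q = innerFH2 p (mulY q) := by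
  simp only [innerFH2, mulY, innerFH_bar_left]
  exact add_comm _ _

lemma innerFH2_mulY_graph (c d g : FH F n) :
    innerFH2 (mulY (c, c * g)) (d, d * g) = 2 * innerFH (bar c) (d * g) := by
  rw [innerFH2, mulY, bar_mul, innerFH_mul_left, bar_bar, two_mul]

lemma IsSelfDual.mem_iff {C : Submodule (FH F n) (FH F n × FH F n)} (hC : IsSelfDual C)
    {v : FH F n × FH F n} : v ∈ C ↔ ∀ c ∈ C, innerFH2 v c = 0 :=
  Set.ext_iff.mp hC v

lemma IsSelfDual.innerFH2_eq_zero {C : Submodule (FH F n) (FH F n × FH F n)} (hC : IsSelfDual C)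
    {u v : FH F n × FH F n} (hu : u ∈ C) (hv : v ∈ C) : innerFH2 u v = 0 :=
  hC.mem_iff.mp hu v hv

lemma isDihedral_of_image_bar_eq {C1 C2 C12 : Ideal (FH F n)} {g : FH F n} [CharP F 2]
    (hsd : IsSelfDual (Submodule.prod C1 C2 ⊔ hatSub C12 g))
    (hbar : bar '' (C1 : Set (FH F n)) = C2) :
    IsDihedral (Submodule.prod C1 C2 ⊔ hatSub C12 g) := by
  have hbar' : ∀ a, bar a ∈ C2 ↔ a ∈ C1 := fun a ↦ by
    rw [← SetLike.mem_coe, ← hbar, bar_involutive.injective.mem_set_image, SetLike.mem_coe]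
  have hprod : ∀ p ∈ Submodule.prod C1 C2, mulY p ∈ Submodule.prod C1 C2 :=
    fun p hp ↦ ⟨(hbar' (bar p.2)).mp (by rw [bar_bar]; exact hp.2), (hbar' p.1).mpr hp.1⟩
  have hhat : ∀ p ∈ hatSub C12 g, mulY p ∈ Submodule.prod C1 C2 ⊔ hatSub C12 g := by
    intro p hp
    refine hsd.mem_iff.mpr fun q hq ↦ ?_
    obtain ⟨q₁, hq₁, q₂, hq₂, rfl⟩ := Submodule.mem_sup.mp hq
    obtain ⟨c, -, rfl⟩ := mem_hatSub.mp hp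
    obtain ⟨d, -, rfl⟩ := mem_hatSub.mp hq₂
    rw [innerFH2_add_right, innerFH2_mulY_left, innerFH2_mulY_graph, CharTwo.two_eq_zero, zero_mul,
      add_zero]
    exact hsd.innerFH2_eq_zero (Submodule.mem_sup_right hp)
      (Submodule.mem_sup_left (hprod q₁ hq₁))
  intro p hp
  obtain ⟨p₁, hp₁, p₂, hp₂, rfl⟩ := Submodule.mem_sup.mp hp
  show mulY (p₁ + p₂) ∈ _
  rw [mulY_add]
  exact add_mem (Submodule.mem_sup_left (hprod p₁ hp₁)) (hhat p₂ hp₂)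

end

theorem self_dual_dihedral_iff_char_two_general (F : Type*) [Field F] (n : ℕ) [NeZero n]
    (hchar : ringChar F = 2)
    (C : Submodule (FH F n) (FH F n × FH F n))
    (C1 C2 C12 : Ideal (FH F n)) (e g h : FH F n)
    (h112 : C1 ⊓ C12 = ⊥) (h212 : C2 ⊓ C12 = ⊥)
    (hid : ∀ c ∈ C12, e * c = c)
    (hgh : g * h = e)
    (hC : C = Submodule.prod C1 C2 ⊔ hatSub C12 g)
    (hsd : IsSelfDual C) :
    IsDihedral C ↔ bar '' (C1 : Set (FH F n)) = (C2 : Set (FH F n)) := by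
  subst hC
  have : CharP F 2 := ringChar.of_eq hchar
  exact ⟨image_bar_eq_of_isDihedral h112 h212 hid hgh, isDihedral_of_image_bar_eq hsd⟩

/-- (char F = 2.) A self-dual 2-quasi-cyclic code `C` with Goursat data
`(C1, C2, C12, g)` is a dihedral code iff `C̄1 = C2`. -/
theorem self_dual_dihedral_iff_char_two (F : Type*) [Field F] [Fintype F] (n : ℕ) [NeZero n]
    (hn : 1 < n) (hcop : Nat.Coprime n (Fintype.card F))
    (hchar : ringChar F = 2)
    (C : Submodule (FH F n) (FH F n × FH F n))
    (C1 C2 C12 : Ideal (FH F n)) (e g h : FH F n)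
    (h112 : C1 ⊓ C12 = ⊥) (h212 : C2 ⊓ C12 = ⊥)
    (heC : e ∈ C12) (hspan : C12 = Ideal.span {e}) (hid : ∀ c ∈ C12, e * c = c)
    (hg : g ∈ C12) (hh : h ∈ C12) (hgh : g * h = e)
    (hC : C = Submodule.prod C1 C2 ⊔ hatSub C12 g)
    (hsd : IsSelfDual C) :
    IsDihedral C ↔ bar '' (C1 : Set (FH F n)) = (C2 : Set (FH F n)) :=
  self_dual_dihedral_iff_char_two_general F n hchar C C1 C2 C12 e g h h112 h212 hid hgh hC hsd
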